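/- arXiv:1910.05667 — 2 statements merged into one kernel-verified Lean document; each statement's English description precedes it below -/
import Mathlib

section
/- Let m, n ≥ 1 and let μ_1, μ_2 be locally valid MV assignments of the square grid crease pattern G_{m,n}. Then there is a finite sequence of single face flips transforming μ_1 into μ_2 in which every intermediate MV assignment is locally valid; that is, the origami flip graph of G_{m,n} is connected. -/
/-- A crease edge of the `m × n` square grid crease pattern: a vertical crease
`V i j` between faces `(i,j)` and `(i+1,j)`, or a horizontal crease `H i j`
between faces `(i,j)` and `(i,j+1)`. -/
inductive Crease (m n : ℕ) : Type where
  | V : (i j : ℕ) → i + 1 < m → j < n → Crease m n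
  | H : (i j : ℕ) → i < m → j + 1 < n → Crease m n

/-- The face `F` borders the crease `e`. -/
def Borders {m n : ℕ} (F : ℕ × ℕ) : Crease m n → Prop
  | .V i j _ _ => F = (i, j) ∨ F = (i + 1, j)
  | .H i j _ _ => F = (i, j) ∨ F = (i, j + 1)

instance {m n : ℕ} (F : ℕ × ℕ) (e : Crease m n) : Decidable (Borders F e) :=
  match e with
  | .V i j _ _ => inferInstanceAs (Decidable (F = (i, j) ∨ F = (i + 1, j)))
  | .H i j _ _ => inferInstanceAs (Decidable (F = (i, j) ∨ F = (i, j + 1)))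

/-- A mountain-valley assignment takes values in `{-1, 1}`. -/
def IsMV {m n : ℕ} (μ : Crease m n → ℤ) : Prop :=
  ∀ e, μ e = 1 ∨ μ e = -1

/-- Local validity: at every interior vertex `(a+1, b+1)` the sum of `μ` over the four
incident crease edges is `2` or `-2`. -/
def LocallyValid {m n : ℕ} (μ : Crease m n → ℤ) : Prop :=
  ∀ a b : ℕ, ∀ ha : a + 1 < m, ∀ hb : b + 1 < n,
    μ (.V a b ha (by omega)) + μ (.V a (b + 1) ha hb) +
      μ (.H a b (by omega) hb) + μ (.H (a + 1) b ha hb) = 2 ∨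
    μ (.V a b ha (by omega)) + μ (.V a (b + 1) ha hb) +
      μ (.H a b (by omega) hb) + μ (.H (a + 1) b ha hb) = -2

/-- The face faceFlip of `μ` at the face `F`. -/
def faceFlip {m n : ℕ} (μ : Crease m n → ℤ) (F : ℕ × ℕ) (e : Crease m n) : ℤ :=
  if Borders F e then -μ e else μ e

/-- The faces of the `m × n` square grid. -/
def Faces (m n : ℕ) : Finset (ℕ × ℕ) := Finset.range m ×ˢ Finset.range n

/-- Applying the face flips of a list of faces in succession, starting from `μ`. -/
def flipSeq {m n : ℕ} (μ : Crease m n → ℤ) (L : List (ℕ × ℕ)) : Crease m n → ℤ :=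
  L.foldl (fun ν F => faceFlip ν F) μ


/-! A face flip changes the signs of exactly two of the four creases at each interior vertex it
touches, so it preserves the parity of mountain folds there, which is all local validity says.
Hence every sequence of face flips stays locally valid. For two valid assignments the
pointwise product `ρ = μ₁ * μ₂` has product `1` around every interior vertex; since the grid is
simply connected, `ρ` is a coboundary: there is a `±1`-valued potential `p` on faces with
`ρ e = p F * p F'` for the two faces `F, F'` bordering `e`. Flipping every face where `p = -1`
turns `μ₁` into `μ₂`. -/

lemma sum_eq_two_or_neg_two_iff_mul_eq_neg_one {x y z w : ℤ} (hx : x = 1 ∨ x = -1)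
    (hy : y = 1 ∨ y = -1) (hz : z = 1 ∨ z = -1) (hw : w = 1 ∨ w = -1) :
    (x + y + z + w = 2 ∨ x + y + z + w = -2) ↔ x * y * z * w = -1 := by
  rcases hx with rfl | rfl <;> rcases hy with rfl | rfl <;> rcases hz with rfl | rfl <;>
    rcases hw with rfl | rfl <;> norm_num

section VertexProd

variable {m n : ℕ}

lemma IsMV.mul {μ ν : Crease m n → ℤ} (hμ : IsMV μ) (hν : IsMV ν) : IsMV (μ * ν) := by
  intro e
  rcases hμ e with h | h <;> rcases hν e with h' | h' <;> simp [h, h']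

def vertexProd (μ : Crease m n → ℤ) (a b : ℕ) (ha : a + 1 < m) (hb : b + 1 < n) : ℤ :=
  μ (.V a b ha (by omega)) * μ (.V a (b + 1) ha hb) * μ (.H a b (by omega) hb) *
    μ (.H (a + 1) b ha hb)

lemma locallyValid_iff_vertexProd {μ : Crease m n → ℤ} (hμ : IsMV μ) :
    LocallyValid μ ↔ ∀ a b ha hb, vertexProd μ a b ha hb = -1 :=
  forall₄_congr fun _ _ _ _ => sum_eq_two_or_neg_two_iff_mul_eq_neg_one (hμ _) (hμ _) (hμ _) (hμ _)

lemma vertexProd_mul (μ ν : Crease m n → ℤ) (a b : ℕ) (ha : a + 1 < m) (hb : b + 1 < n) :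
    vertexProd (μ * ν) a b ha hb = vertexProd μ a b ha hb * vertexProd ν a b ha hb := by
  simp only [vertexProd, Pi.mul_apply]
  ring

/-- Each face borders either none or exactly two of the four creases at a vertex. -/
lemma vertexProd_faceFlip (μ : Crease m n → ℤ) (F : ℕ × ℕ) (a b : ℕ) (ha : a + 1 < m)
    (hb : b + 1 < n) : vertexProd (faceFlip μ F) a b ha hb = vertexProd μ a b ha hb := by
  obtain ⟨x, y⟩ := F
  simp only [vertexProd, faceFlip, Borders, Prod.mk.injEq]
  split_ifs <;> first | ring1 | (exfalso; omega)

end VertexProd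

section Flips

variable {m n : ℕ}

lemma isMV_faceFlip {μ : Crease m n → ℤ} (hμ : IsMV μ) (F : ℕ × ℕ) : IsMV (faceFlip μ F) := by
  intro e
  unfold faceFlip
  rcases hμ e with h | h <;> split_ifs <;> simp [h]

lemma locallyValid_faceFlip {μ : Crease m n → ℤ} (hμ : IsMV μ) (hval : LocallyValid μ)
    (F : ℕ × ℕ) : LocallyValid (faceFlip μ F) := by
  rw [locallyValid_iff_vertexProd (isMV_faceFlip hμ F)]
  intro a b ha hb
  rw [vertexProd_faceFlip]
  exact (locallyValid_iff_vertexProd hμ).1 hval a b ha hb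

lemma flipSeq_isMV_locallyValid (L : List (ℕ × ℕ)) {μ : Crease m n → ℤ} (hμ : IsMV μ)
    (hval : LocallyValid μ) : IsMV (flipSeq μ L) ∧ LocallyValid (flipSeq μ L) := by
  induction L generalizing μ with
  | nil => exact ⟨hμ, hval⟩
  | cons F L ih => exact ih (isMV_faceFlip hμ F) (locallyValid_faceFlip hμ hval F)

lemma flipSeq_apply (L : List (ℕ × ℕ)) (μ : Crease m n → ℤ) (e : Crease m n) :
    flipSeq μ L e = (L.map fun F => if Borders F e then (-1 : ℤ) else 1).prod * μ e := by
  induction L generalizing μ with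
  | nil => simp [flipSeq]
  | cons F L ih =>
    change flipSeq (faceFlip μ F) L e = _
    rw [ih, List.map_cons, List.prod_cons, faceFlip]
    split_ifs <;> ring

lemma flipSeq_toList_apply (S : Finset (ℕ × ℕ)) (μ : Crease m n → ℤ) (e : Crease m n) :
    flipSeq μ S.toList e = (∏ F ∈ S, if Borders F e then (-1 : ℤ) else 1) * μ e := by
  rw [flipSeq_apply, Finset.prod_map_toList]

end Flips

lemma prod_filter_eq_neg_one_ite {α : Type*} (T : Finset α) (P : α → Prop) [DecidablePred P]
    (p : α → ℤ) (hp : ∀ a, p a = 1 ∨ p a = -1) :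
    ∏ a ∈ T with p a = -1, (if P a then (-1 : ℤ) else 1) = ∏ a ∈ T with P a, p a := by
  rw [Finset.prod_filter, Finset.prod_filter]
  refine Finset.prod_congr rfl fun a _ => ?_
  rcases hp a with h | h <;> simp [h]

section Potential

variable {m n : ℕ}

/-- `ρ` on the vertical crease `V i j`, extended by `1` off the grid so that no bounds are
needed when walking along paths. -/
def vertVal (ρ : Crease m n → ℤ) (i j : ℕ) : ℤ :=
  if h : i + 1 < m ∧ j < n then ρ (.V i j h.1 h.2) else 1

def horzVal (ρ : Crease m n → ℤ) (i j : ℕ) : ℤ :=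
  if h : i < m ∧ j + 1 < n then ρ (.H i j h.1 h.2) else 1

lemma vertVal_of_lt (ρ : Crease m n → ℤ) {i j : ℕ} (hi : i + 1 < m) (hj : j < n) :
    vertVal ρ i j = ρ (.V i j hi hj) :=
  dif_pos ⟨hi, hj⟩

lemma horzVal_of_lt (ρ : Crease m n → ℤ) {i j : ℕ} (hi : i < m) (hj : j + 1 < n) :
    horzVal ρ i j = ρ (.H i j hi hj) :=
  dif_pos ⟨hi, hj⟩

lemma vertVal_eq_one_or_neg_one {ρ : Crease m n → ℤ} (hρ : IsMV ρ) (i j : ℕ) :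
    vertVal ρ i j = 1 ∨ vertVal ρ i j = -1 := by
  unfold vertVal
  split
  · exact hρ _
  · exact .inl rfl

lemma horzVal_eq_one_or_neg_one {ρ : Crease m n → ℤ} (hρ : IsMV ρ) (i j : ℕ) :
    horzVal ρ i j = 1 ∨ horzVal ρ i j = -1 := by
  unfold horzVal
  split
  · exact hρ _
  · exact .inl rfl

lemma vertexProd_eq (ρ : Crease m n → ℤ) (a b : ℕ) (ha : a + 1 < m) (hb : b + 1 < n) :
    vertexProd ρ a b ha hb =
      vertVal ρ a b * vertVal ρ a (b + 1) * horzVal ρ a b * horzVal ρ (a + 1) b := by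
  rw [vertVal_of_lt ρ ha (by omega), vertVal_of_lt ρ ha hb, horzVal_of_lt ρ (by omega) hb,
    horzVal_of_lt ρ ha hb, vertexProd]

/-- The product of `ρ` along the path from face `(0, 0)` to `(i, 0)` and then to `(i, j)`. -/
def potential (ρ : Crease m n → ℤ) (F : ℕ × ℕ) : ℤ :=
  (∏ k ∈ Finset.range F.1, vertVal ρ k 0) * ∏ l ∈ Finset.range F.2, horzVal ρ F.1 l

lemma potential_eq_one_or_neg_one {ρ : Crease m n → ℤ} (hρ : IsMV ρ) (F : ℕ × ℕ) :
    potential ρ F = 1 ∨ potential ρ F = -1 :=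
  Int.isUnit_iff.1 <|
    (IsUnit.prod_iff.2 fun k _ => Int.isUnit_iff.2 (vertVal_eq_one_or_neg_one hρ k 0)).mul
      (IsUnit.prod_iff.2 fun l _ => Int.isUnit_iff.2 (horzVal_eq_one_or_neg_one hρ F.1 l))

lemma potential_mul_self {ρ : Crease m n → ℤ} (hρ : IsMV ρ) (F : ℕ × ℕ) :
    potential ρ F * potential ρ F = 1 :=
  Int.isUnit_mul_self (Int.isUnit_iff.2 (potential_eq_one_or_neg_one hρ F))

lemma potential_succ_fst_zero (ρ : Crease m n → ℤ) (i : ℕ) :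
    potential ρ (i + 1, 0) = potential ρ (i, 0) * vertVal ρ i 0 := by
  simp [potential, Finset.prod_range_succ]

lemma potential_succ_snd (ρ : Crease m n → ℤ) (i j : ℕ) :
    potential ρ (i, j + 1) = potential ρ (i, j) * horzVal ρ i j := by
  simp only [potential, Finset.prod_range_succ]
  ring

lemma potential_mul_potential_succ_snd {ρ : Crease m n → ℤ} (hρ : IsMV ρ) (i j : ℕ) :
    potential ρ (i, j) * potential ρ (i, j + 1) = horzVal ρ i j := by
  rw [potential_succ_snd, ← mul_assoc, potential_mul_self hρ, one_mul]

/-- By induction on `j`: closedness at the interior vertex `(i + 1, j + 1)` carries the identity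
from `j` to `j + 1`. -/
lemma potential_mul_potential_succ_fst {ρ : Crease m n → ℤ} (hρ : IsMV ρ)
    (hclosed : ∀ a b ha hb, vertexProd ρ a b ha hb = 1) {i : ℕ} (hi : i + 1 < m) :
    ∀ j < n, potential ρ (i, j) * potential ρ (i + 1, j) = vertVal ρ i j := by
  intro j hj
  induction j with
  | zero =>
    rw [potential_succ_fst_zero, ← mul_assoc, potential_mul_self hρ, one_mul]
  | succ j ih =>
    have hrow := ih (by omega)
    have hvertex := vertexProd_eq ρ i j hi hj ▸ hclosed i j hi hj
    have hsq := Int.isUnit_mul_self (Int.isUnit_iff.2 (vertVal_eq_one_or_neg_one hρ i (j + 1)))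
    rw [potential_succ_snd, potential_succ_snd]
    linear_combination (horzVal ρ i j * horzVal ρ (i + 1) j) * hrow +
      vertVal ρ i (j + 1) * hvertex -
      (vertVal ρ i j * horzVal ρ i j * horzVal ρ (i + 1) j) * hsq

lemma filter_borders_V (i j : ℕ) (hi : i + 1 < m) (hj : j < n) :
    {F ∈ Faces m n | Borders F (.V i j hi hj : Crease m n)} = {(i, j), (i + 1, j)} := by
  ext ⟨x, y⟩
  rw [Finset.mem_filter]
  simp only [Faces, Borders, Finset.mem_product, Finset.mem_range, Finset.mem_insert,
    Finset.mem_singleton, Prod.mk.injEq]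
  omega

lemma filter_borders_H (i j : ℕ) (hi : i < m) (hj : j + 1 < n) :
    {F ∈ Faces m n | Borders F (.H i j hi hj : Crease m n)} = {(i, j), (i, j + 1)} := by
  ext ⟨x, y⟩
  rw [Finset.mem_filter]
  simp only [Faces, Borders, Finset.mem_product, Finset.mem_range, Finset.mem_insert,
    Finset.mem_singleton, Prod.mk.injEq]
  omega

lemma prod_potential_borders {ρ : Crease m n → ℤ} (hρ : IsMV ρ)
    (hclosed : ∀ a b ha hb, vertexProd ρ a b ha hb = 1) (e : Crease m n) :
    ∏ F ∈ Faces m n with Borders F e, potential ρ F = ρ e := by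
  cases e with
  | V i j hi hj =>
    rw [filter_borders_V, Finset.prod_pair (by simp),
      potential_mul_potential_succ_fst hρ hclosed hi j hj, vertVal_of_lt]
  | H i j hi hj =>
    rw [filter_borders_H, Finset.prod_pair (by simp), potential_mul_potential_succ_snd hρ,
      horzVal_of_lt]

end Potential

theorem square_grid_flip_graph_connected_general (m n : ℕ)
    (μ₁ μ₂ : Crease m n → ℤ) (hmv₁ : IsMV μ₁) (hmv₂ : IsMV μ₂)
    (hval₁ : LocallyValid μ₁) (hval₂ : LocallyValid μ₂) :
    ∃ L : List (ℕ × ℕ), (∀ F ∈ L, F ∈ Faces m n) ∧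
      flipSeq μ₁ L = μ₂ ∧
      ∀ k ≤ L.length,
        IsMV (flipSeq μ₁ (L.take k)) ∧ LocallyValid (flipSeq μ₁ (L.take k)) := by
  have hρ : IsMV (μ₁ * μ₂) := hmv₁.mul hmv₂
  have hclosed : ∀ a b ha hb, vertexProd (μ₁ * μ₂) a b ha hb = 1 := fun a b ha hb => by
    rw [vertexProd_mul, (locallyValid_iff_vertexProd hmv₁).1 hval₁,
      (locallyValid_iff_vertexProd hmv₂).1 hval₂]
    norm_num
  refine ⟨{F ∈ Faces m n | potential (μ₁ * μ₂) F = -1}.toList,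
    fun F hF => (Finset.mem_filter.1 (Finset.mem_toList.1 hF)).1, ?_,
    fun k _ => flipSeq_isMV_locallyValid _ hmv₁ hval₁⟩
  funext e
  rw [flipSeq_toList_apply, prod_filter_eq_neg_one_ite _ _ _ (potential_eq_one_or_neg_one hρ),
    prod_potential_borders hρ hclosed, Pi.mul_apply]
  rcases hmv₁ e with h | h <;> rw [h] <;> ring

/-- Any two locally valid MV assignments of the square grid are connected by a finite
sequence of single face flips all of whose intermediate MV assignments are locally
valid: the origami flip graph of the square grid is connected. -/
theorem square_grid_flip_graph_connected (m n : ℕ) (hm : 1 ≤ m) (hn : 1 ≤ n)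
    (μ₁ μ₂ : Crease m n → ℤ) (hmv₁ : IsMV μ₁) (hmv₂ : IsMV μ₂)
    (hval₁ : LocallyValid μ₁) (hval₂ : LocallyValid μ₂) :
    ∃ L : List (ℕ × ℕ), (∀ F ∈ L, F ∈ Faces m n) ∧
      flipSeq μ₁ L = μ₂ ∧
      ∀ k ≤ L.length,
        IsMV (flipSeq μ₁ (L.take k)) ∧ LocallyValid (flipSeq μ₁ (L.take k)) :=
  square_grid_flip_graph_connected_general m n μ₁ μ₂ hmv₁ hmv₂ hval₁ hval₂
end

section
/- Let m, n ≥ 1 and let c be a proper 3-coloring of the m×n grid graph. Then for every vertex v₀ and every integer t with t ≡ c(v₀) (mod 3), there exists exactly one height function h for c with h(v₀) = t. -/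
/-- Adjacency in the `m × n` grid graph: two vertices are adjacent iff they differ by
`1` in exactly one coordinate. -/
def GridAdj {m n : ℕ} (u v : Fin m × Fin n) : Prop :=
  (u.1 = v.1 ∧ ((u.2 : ℕ) = (v.2 : ℕ) + 1 ∨ (v.2 : ℕ) = (u.2 : ℕ) + 1)) ∨
  (u.2 = v.2 ∧ ((u.1 : ℕ) = (v.1 : ℕ) + 1 ∨ (v.1 : ℕ) = (u.1 : ℕ) + 1))

/-- A proper 3-coloring of the `m × n` grid graph. -/
def Proper3 {m n : ℕ} (c : Fin m × Fin n → ZMod 3) : Prop :=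
  ∀ u v : Fin m × Fin n, GridAdj u v → c u ≠ c v

/-- A height function for a 3-coloring `c`: congruent to `c` mod 3 at every vertex,
and differing by exactly `1` across every edge of the grid graph. -/
def IsHeight {m n : ℕ} (c : Fin m × Fin n → ZMod 3) (h : Fin m × Fin n → ℤ) : Prop :=
  (∀ v : Fin m × Fin n, ((h v : ℤ) : ZMod 3) = c v) ∧
  ∀ u v : Fin m × Fin n, GridAdj u v → |h u - h v| = 1

namespace HFaux

def stepZ : ZMod 3 → ℤ := fun d => if d = 1 then 1 else if d = 2 then -1 else 0
lemma stepZ_cast : ∀ d : ZMod 3, d ≠ 0 → ((stepZ d : ℤ) : ZMod 3) = d := by decide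
lemma stepZ_abs : ∀ d : ZMod 3, d ≠ 0 → |stepZ d| = 1 := by decide
lemma stepZ_square : ∀ x y z w : ZMod 3, x ≠ y → x ≠ z → y ≠ w → z ≠ w →
    stepZ (y - x) + stepZ (w - y) = stepZ (z - x) + stepZ (w - z) := by decide

variable {m n : ℕ}

def vtx (hm : 1 ≤ m) (hn : 1 ≤ n) (i j : ℕ) : Fin m × Fin n :=
  (⟨min i (m-1), by omega⟩, ⟨min j (n-1), by omega⟩)

lemma vtx_pair (hm : 1 ≤ m) (hn : 1 ≤ n) (x : Fin m) (y : Fin n) :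
    vtx hm hn (x : ℕ) (y : ℕ) = (x, y) := by
  have hx := x.isLt; have hy := y.isLt
  simp only [vtx, Prod.mk.injEq, Fin.ext_iff]
  constructor <;> simp <;> omega

lemma adj_row (hm : 1 ≤ m) (hn : 1 ≤ n) {i j : ℕ} (hi : i < m) (hj : j + 1 < n) :
    GridAdj (vtx hm hn i j) (vtx hm hn i (j+1)) := by
  left
  refine ⟨rfl, Or.inr ?_⟩
  simp only [vtx]
  omega

lemma adj_col (hm : 1 ≤ m) (hn : 1 ≤ n) {i j : ℕ} (hi : i + 1 < m) (hj : j < n) :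
    GridAdj (vtx hm hn i j) (vtx hm hn (i+1) j) := by
  right
  refine ⟨rfl, Or.inr ?_⟩
  simp only [vtx]
  omega

end HFaux
namespace HFaux
variable {m n : ℕ}

def Prow (hm : 1 ≤ m) (hn : 1 ≤ n) (c : Fin m × Fin n → ZMod 3) (a j : ℕ) : ℤ :=
  ∑ k ∈ Finset.range j, stepZ (c (vtx hm hn a (k+1)) - c (vtx hm hn a k))

def Qcol (hm : 1 ≤ m) (hn : 1 ≤ n) (c : Fin m × Fin n → ZMod 3) (j i : ℕ) : ℤ :=
  ∑ k ∈ Finset.range i, stepZ (c (vtx hm hn (k+1) j) - c (vtx hm hn k j))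

def Hfun (hm : 1 ≤ m) (hn : 1 ≤ n) (c : Fin m × Fin n → ZMod 3) (a b : ℕ) (t : ℤ) :
    Fin m × Fin n → ℤ := fun v =>
  t - Prow hm hn c a b + Prow hm hn c a (v.2 : ℕ)
    - Qcol hm hn c (v.2 : ℕ) a + Qcol hm hn c (v.2 : ℕ) (v.1 : ℕ)

lemma Fconst (hm : 1 ≤ m) (hn : 1 ≤ n) (c : Fin m × Fin n → ZMod 3) (hc : Proper3 c)
    {j : ℕ} (hj : j + 1 < n) :
    ∀ i, i < m →
      stepZ (c (vtx hm hn i (j+1)) - c (vtx hm hn i j)) + Qcol hm hn c j i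
        - Qcol hm hn c (j+1) i
      = stepZ (c (vtx hm hn 0 (j+1)) - c (vtx hm hn 0 j)) := by
  intro i
  induction i with
  | zero => intro _; simp [Qcol]
  | succ i ih =>
    intro hi1
    have hi : i < m := by omega
    have hsq := stepZ_square (c (vtx hm hn i j)) (c (vtx hm hn i (j+1)))
      (c (vtx hm hn (i+1) j)) (c (vtx hm hn (i+1) (j+1)))
      (hc _ _ (adj_row hm hn hi hj))
      (hc _ _ (adj_col hm hn (by omega) (by omega)))
      (by
        have := hc _ _ (adj_col hm hn (i := i) (j := j+1) (by omega) (by omega))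
        exact this)
      (hc _ _ (adj_row hm hn (by omega) hj))
    have h1 : Qcol hm hn c j (i+1) = Qcol hm hn c j i
        + stepZ (c (vtx hm hn (i+1) j) - c (vtx hm hn i j)) := by
      simp [Qcol, Finset.sum_range_succ]
    have h2 : Qcol hm hn c (j+1) (i+1) = Qcol hm hn c (j+1) i
        + stepZ (c (vtx hm hn (i+1) (j+1)) - c (vtx hm hn i (j+1))) := by
      simp [Qcol, Finset.sum_range_succ]
    have := ih hi
    rw [h1, h2]
    linarith [hsq, this]
end HFaux
namespace HFaux
variable {m n : ℕ}

lemma Hstep_col (hm : 1 ≤ m) (hn : 1 ≤ n) (c : Fin m × Fin n → ZMod 3)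
    (a b : ℕ) (t : ℤ) {u v : Fin m × Fin n}
    (h1 : u.2 = v.2) (h2 : (v.1 : ℕ) = (u.1 : ℕ) + 1) :
    Hfun hm hn c a b t v - Hfun hm hn c a b t u = stepZ (c v - c u) := by
  have hv : vtx hm hn (u.1 : ℕ) (u.2 : ℕ) = u := by
    rw [vtx_pair]
  have hv2 : vtx hm hn ((u.1:ℕ)+1) (u.2 : ℕ) = v := by
    rw [← h2, h1, vtx_pair]
  simp only [Hfun, ← h1, h2]
  have : Qcol hm hn c (u.2 : ℕ) ((u.1:ℕ)+1) = Qcol hm hn c (u.2 : ℕ) (u.1 : ℕ)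
      + stepZ (c v - c u) := by
    simp [Qcol, Finset.sum_range_succ, hv, hv2]
  rw [this]; ring

lemma Hstep_row (hm : 1 ≤ m) (hn : 1 ≤ n) (c : Fin m × Fin n → ZMod 3) (hc : Proper3 c)
    {a : ℕ} (ha : a < m) (b : ℕ) (t : ℤ) {u v : Fin m × Fin n}
    (h1 : u.1 = v.1) (h2 : (v.2 : ℕ) = (u.2 : ℕ) + 1) :
    Hfun hm hn c a b t v - Hfun hm hn c a b t u = stepZ (c v - c u) := by
  set j := (u.2 : ℕ) with hjdef
  have hj : j + 1 < n := by rw [← h2]; exact v.2.isLt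
  have hFi := Fconst hm hn c hc hj (u.1 : ℕ) u.1.isLt
  have hFa := Fconst hm hn c hc hj a ha
  have hP : Prow hm hn c a (j+1) = Prow hm hn c a j
      + stepZ (c (vtx hm hn a (j+1)) - c (vtx hm hn a j)) := by
    simp [Prow, Finset.sum_range_succ]
  have hu : vtx hm hn (u.1 : ℕ) j = u := by rw [hjdef, vtx_pair]
  have hv : vtx hm hn (u.1 : ℕ) (j+1) = v := by
    rw [← h2, h1, vtx_pair]
  simp only [Hfun, ← h1, h2]
  rw [hP]
  rw [hu, hv] at hFi
  linarith [hFi, hFa]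

lemma Hmod (hm : 1 ≤ m) (hn : 1 ≤ n) (c : Fin m × Fin n → ZMod 3) (hc : Proper3 c)
    {a b : ℕ} (ha : a < m) (hb : b < n) (t : ℤ)
    (ht : ((t : ℤ) : ZMod 3) = c (vtx hm hn a b)) (v : Fin m × Fin n) :
    ((Hfun hm hn c a b t v : ℤ) : ZMod 3) = c v := by
  have castP : ∀ j : ℕ, j < n →
      ((Prow hm hn c a j : ℤ) : ZMod 3) = c (vtx hm hn a j) - c (vtx hm hn a 0) := by
    intro j hjn
    have h1 : ((Prow hm hn c a j : ℤ) : ZMod 3)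
        = ∑ k ∈ Finset.range j, (c (vtx hm hn a (k+1)) - c (vtx hm hn a k)) := by
      unfold Prow
      rw [Int.cast_sum]
      refine Finset.sum_congr rfl ?_
      intro k hk
      have hk' : k + 1 < n := by
        have := Finset.mem_range.mp hk; omega
      exact stepZ_cast _ (sub_ne_zero_of_ne (Ne.symm (hc _ _ (adj_row hm hn ha hk'))))
    rw [h1, Finset.sum_range_sub (fun k => c (vtx hm hn a k))]
  have castQ : ∀ j i : ℕ, j < n → i < m →
      ((Qcol hm hn c j i : ℤ) : ZMod 3) = c (vtx hm hn i j) - c (vtx hm hn 0 j) := by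
    intro j i hjn him
    have h1 : ((Qcol hm hn c j i : ℤ) : ZMod 3)
        = ∑ k ∈ Finset.range i, (c (vtx hm hn (k+1) j) - c (vtx hm hn k j)) := by
      unfold Qcol
      rw [Int.cast_sum]
      refine Finset.sum_congr rfl ?_
      intro k hk
      have hk' : k + 1 < m := by
        have := Finset.mem_range.mp hk; omega
      exact stepZ_cast _ (sub_ne_zero_of_ne (Ne.symm (hc _ _ (adj_col hm hn hk' hjn))))
    rw [h1, Finset.sum_range_sub (fun k => c (vtx hm hn k j))]
  have hvv : vtx hm hn (v.1 : ℕ) (v.2 : ℕ) = v := vtx_pair hm hn v.1 v.2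
  unfold Hfun
  push_cast
  rw [castP _ hb, castP _ v.2.isLt, castQ _ _ v.2.isLt ha, castQ _ _ v.2.isLt v.1.isLt, hvv,
    ht]
  ring

end HFaux
namespace HFaux
variable {m n : ℕ}

lemma stepZ_flip : ∀ x y : ZMod 3, x ≠ y → stepZ (x - y) = -stepZ (y - x) := by decide

lemma height_step (c : Fin m × Fin n → ZMod 3) {h : Fin m × Fin n → ℤ}
    (hh : IsHeight c h) {u v : Fin m × Fin n} (huv : GridAdj u v) :
    h v - h u = stepZ (c v - c u) := by
  have habs := hh.2 u v huv
  have hcast : ((h v - h u : ℤ) : ZMod 3) = c v - c u := by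
    push_cast
    rw [hh.1 u, hh.1 v]
  rcases (abs_eq (by norm_num : (0:ℤ) ≤ 1)).mp habs with h1 | h1
  · have e : h v - h u = -1 := by omega
    have e2 : c v - c u = 2 := by
      rw [← hcast, e]
      simp only [Int.cast_neg, Int.cast_one]
      decide
    rw [e, e2]; decide
  · have e : h v - h u = 1 := by omega
    have e2 : c v - c u = 1 := by
      rw [← hcast, e]
      simp only [Int.cast_one]
    rw [e, e2]; decide

lemma adj_symm {u v : Fin m × Fin n} (h : GridAdj u v) : GridAdj v u := by
  unfold GridAdj at *
  tauto

end HFaux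

/-- For every proper 3-coloring `c` of the grid, every vertex `v₀` and every integer
`t ≡ c v₀ (mod 3)`, there is exactly one height function for `c` taking value `t`
at `v₀`. -/
theorem height_function_exists_unique (m n : ℕ) (hm : 1 ≤ m) (hn : 1 ≤ n)
    (c : Fin m × Fin n → ZMod 3) (hc : Proper3 c)
    (v₀ : Fin m × Fin n) (t : ℤ) (ht : ((t : ℤ) : ZMod 3) = c v₀) :
    ∃! h : Fin m × Fin n → ℤ, IsHeight c h ∧ h v₀ = t := by
  classical
  set a := (v₀.1 : ℕ) with hadef
  set b := (v₀.2 : ℕ) with hbdef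
  have ha : a < m := v₀.1.isLt
  have hb : b < n := v₀.2.isLt
  have hv₀ : HFaux.vtx hm hn a b = v₀ := HFaux.vtx_pair hm hn v₀.1 v₀.2
  set H := HFaux.Hfun hm hn c a b t with hHdef
  have Hstep : ∀ u v : Fin m × Fin n, GridAdj u v →
      H v - H u = HFaux.stepZ (c v - c u) := by
    intro u v huv
    have hne : c u ≠ c v := hc u v huv
    rcases huv with ⟨h1, h2 | h2⟩ | ⟨h1, h2 | h2⟩
    · have := HFaux.Hstep_row hm hn c hc ha b t h1.symm h2
      have hf := HFaux.stepZ_flip (c v) (c u) (Ne.symm hne)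
      rw [hf]
      linarith [this]
    · exact HFaux.Hstep_row hm hn c hc ha b t h1 h2
    · have := HFaux.Hstep_col hm hn c a b t h1.symm h2
      have hf := HFaux.stepZ_flip (c v) (c u) (Ne.symm hne)
      rw [hf]
      linarith [this]
    · exact HFaux.Hstep_col hm hn c a b t h1 h2
  have Ht : H v₀ = t := by
    simp only [hHdef, HFaux.Hfun, ← hadef, ← hbdef]
    ring
  have HisH : IsHeight c H := by
    constructor
    · intro v
      exact HFaux.Hmod hm hn c hc ha hb t (by rw [hv₀]; exact ht) v
    · intro u v huv
      rw [abs_sub_comm, Hstep u v huv]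
      exact HFaux.stepZ_abs _ (sub_ne_zero_of_ne (Ne.symm (hc u v huv)))
  refine ⟨H, ⟨HisH, Ht⟩, ?_⟩
  intro h ⟨hh, hht⟩
  have key : ∀ u v : Fin m × Fin n, GridAdj u v → h v - h u = H v - H u := by
    intro u v huv
    rw [HFaux.height_step c hh huv, Hstep u v huv]
  set g := fun v => h v - H v with hgdef
  have grow : ∀ j, j < n → g (HFaux.vtx hm hn a j) = g (HFaux.vtx hm hn a 0) := by
    intro j
    induction j with
    | zero => intro _; rfl
    | succ j ih =>
      intro hj1
      have hj : j < n := by omega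
      have := key _ _ (HFaux.adj_row hm hn ha hj1)
      have hg : g (HFaux.vtx hm hn a (j+1)) = g (HFaux.vtx hm hn a j) := by
        simp only [hgdef]; linarith [this]
      rw [hg, ih hj]
  have gv₀ : g v₀ = 0 := by simp [hgdef, hht, Ht]
  have g0 : g (HFaux.vtx hm hn a 0) = 0 := by
    rw [← grow b hb, hv₀, gv₀]
  have grow0 : ∀ j, j < n → g (HFaux.vtx hm hn a j) = 0 := fun j hj => by
    rw [grow j hj, g0]
  have gcol : ∀ j, j < n → ∀ i, i < m →
      g (HFaux.vtx hm hn i j) = g (HFaux.vtx hm hn 0 j) := by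
    intro j hj i
    induction i with
    | zero => intro _; rfl
    | succ i ih =>
      intro hi1
      have hi : i < m := by omega
      have := key _ _ (HFaux.adj_col hm hn hi1 hj)
      have hg : g (HFaux.vtx hm hn (i+1) j) = g (HFaux.vtx hm hn i j) := by
        simp only [hgdef]; linarith [this]
      rw [hg, ih hi]
  have gall : ∀ j, j < n → ∀ i, i < m → g (HFaux.vtx hm hn i j) = 0 := by
    intro j hj i hi
    rw [gcol j hj i hi, ← gcol j hj a ha, grow0 j hj]
  funext v
  have := gall (v.2 : ℕ) v.2.isLt (v.1 : ℕ) v.1.isLt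
  rw [HFaux.vtx_pair hm hn v.1 v.2] at this
  simp only [hgdef, Prod.mk.eta] at this
  linarith [this]
end
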